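/- For any letter a and words of length n over an alphabet of n letters, the commutator identity holds: R2R_{n+1} ∘ sh_a - sh_a ∘ R2R_n = (n+1)·sh_a + Σ_{b=1}^{n} sh_b ∘ Θ_{b,a}. -/

import Mathlib

/-!
Each term of `R2R` (remove the letter at position `i`, reinsert it at position `j`) is a
deletion `∂_b` of the letter `b = w[i]` followed by an insertion `sh_b`, so `R2R = ∑_b sh_b ∘ ∂_b`.
Since insertions commute, `R2R ∘ sh_a - sh_a ∘ R2R = ∑_b sh_b ∘ (∂_b ∘ sh_a - sh_a ∘ ∂_b)`, and the
commutation relation `∂_b ∘ sh_a - sh_a ∘ ∂_b = Θ_{b,a} + δ_{a,b} (n + 1)` on words of length `n`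
follows by induction on the word from the way each operator interacts with prepending a letter.
-/

open Finsupp

variable {A : Type} [DecidableEq A]

/-- The formal sum of `Finsupp.single w 1` over a list of words. -/
noncomputable def wordSum (l : List (List A)) : List A →₀ ℂ :=
  (l.map fun w => Finsupp.single w (1 : ℂ)).sum

/-- All words obtained from `w` by inserting the letter `a` at one position. -/
def insertions (a : A) : List A → List (List A)
  | [] => [[a]]
  | b :: t => (a :: b :: t) :: (insertions a t).map (b :: ·)

/-- All words obtained from `w` by deleting one occurrence of the letter `a`. -/
def deletions (a : A) : List A → List (List A)
  | [] => []
  | b :: t => (if b = a then [t] else []) ++ (deletions a t).map (b :: ·)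

/-- All words obtained from `w` by replacing one occurrence of `b` by `a`. -/
def replacements (b a : A) : List A → List (List A)
  | [] => []
  | c :: t => (if c = b then [a :: t] else []) ++ (replacements b a t).map (c :: ·)

/-- The insertion operator `sh_a`. -/
noncomputable def shOp (a : A) : (List A →₀ ℂ) →ₗ[ℂ] (List A →₀ ℂ) :=
  Finsupp.linearCombination ℂ (fun w => wordSum (insertions a w))

/-- The deletion operator `∂_a`. -/
noncomputable def delOp (a : A) : (List A →₀ ℂ) →ₗ[ℂ] (List A →₀ ℂ) :=
  Finsupp.linearCombination ℂ (fun w => wordSum (deletions a w))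

/-- The replacement operator `Θ_{b,a}`. -/
noncomputable def repOp (b a : A) : (List A →₀ ℂ) →ₗ[ℂ] (List A →₀ ℂ) :=
  Finsupp.linearCombination ℂ (fun w => wordSum (replacements b a w))

/-- Remove the letter at position `i` of `w` and reinsert it at position `j` (0-based). -/
def moveCard (w : List A) (i j : ℕ) : List A :=
  match w[i]? with
  | Option.none => w
  | Option.some c => (w.eraseIdx i).insertIdx j c

/-- The random-to-random operator applied to a single word: the sum over all ordered
pairs of positions `(i, j)` of removing the letter at position `i` and reinserting it
at position `j` (the diagonal `i = j` contributes `w.length • w`). -/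
noncomputable def r2rWord (w : List A) : List A →₀ ℂ :=
  ∑ i ∈ Finset.range w.length, ∑ j ∈ Finset.range w.length,
    Finsupp.single (moveCard w i j) (1 : ℂ)

/-- The (unnormalized) random-to-random operator `R2R`. -/
noncomputable def r2rOp : (List A →₀ ℂ) →ₗ[ℂ] (List A →₀ ℂ) :=
  Finsupp.linearCombination ℂ r2rWord

/-- Random-to-top on a single word: move the letter at each position to the end. -/
noncomputable def r2tWord (w : List A) : List A →₀ ℂ :=
  ∑ i ∈ Finset.range w.length, Finsupp.single (moveCard w i (w.length - 1)) (1 : ℂ)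

/-- The (unnormalized) random-to-top operator `R2T`. -/
noncomputable def r2tOp : (List A →₀ ℂ) →ₗ[ℂ] (List A →₀ ℂ) :=
  Finsupp.linearCombination ℂ r2tWord

/-- Top-to-random on a single word: move the last letter to each position. -/
noncomputable def t2rWord (w : List A) : List A →₀ ℂ :=
  ∑ j ∈ Finset.range w.length, Finsupp.single (moveCard w (w.length - 1) j) (1 : ℂ)

/-- The (unnormalized) top-to-random operator `T2R`. -/
noncomputable def t2rOp : (List A →₀ ℂ) →ₗ[ℂ] (List A →₀ ℂ) :=
  Finsupp.linearCombination ℂ t2rWord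

section Words

variable {α : Type}

noncomputable def consOp (c : α) : (List α →₀ ℂ) →ₗ[ℂ] (List α →₀ ℂ) :=
  lmapDomain ℂ ℂ (List.cons c)

@[simp]
lemma consOp_single (c : α) (w : List α) (r : ℂ) :
    consOp c (single w r) = single (c :: w) r :=
  mapDomain_single

@[simp]
lemma wordSum_nil : wordSum ([] : List (List α)) = 0 := rfl

@[simp]
lemma wordSum_cons (w : List α) (l : List (List α)) :
    wordSum (w :: l) = single w 1 + wordSum l := by
  simp [wordSum]

@[simp]
lemma wordSum_append (l₁ l₂ : List (List α)) :
    wordSum (l₁ ++ l₂) = wordSum l₁ + wordSum l₂ := by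
  simp [wordSum]

@[simp]
lemma wordSum_map_cons (c : α) (l : List (List α)) :
    wordSum (l.map (c :: ·)) = consOp c (wordSum l) := by
  induction l with
  | nil => simp
  | cons w l ih => simp [ih]

lemma shOp_single (a : α) (w : List α) :
    shOp a (single w 1) = wordSum (insertions a w) := by
  simp [shOp, linearCombination_single]

lemma shOp_single_cons (a c : α) (t : List α) :
    shOp a (single (c :: t) 1) = single (a :: c :: t) 1 + consOp c (shOp a (single t 1)) := by
  simp [shOp_single, insertions]

lemma shOp_consOp (a c : α) (v : List α →₀ ℂ) :
    shOp a (consOp c v) = consOp a (consOp c v) + consOp c (shOp a v) := by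
  have h : shOp a ∘ₗ consOp c = consOp a ∘ₗ consOp c + consOp c ∘ₗ shOp a := by
    ext w : 2
    simp [shOp_single_cons]
  exact LinearMap.congr_fun h v

lemma shOp_comm (a b : α) : shOp a ∘ₗ shOp b = shOp b ∘ₗ shOp a := by
  ext w : 2
  induction w with
  | nil =>
    simp [shOp_single, insertions]
    abel
  | cons c t ih =>
    simp_all only [LinearMap.comp_apply, lsingle_apply, shOp_single_cons, map_add, shOp_consOp,
      consOp_single]
    abel

lemma shOp_single_eq_sum (c : α) (u : List α) :
    shOp c (single u 1) = ∑ j ∈ Finset.range (u.length + 1), single (u.insertIdx j c) 1 := by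
  induction u with
  | nil => simp [shOp_single, insertions]
  | cons d t ih =>
    rw [shOp_single_cons, ih, map_sum, List.length_cons, Finset.sum_range_succ' _ (t.length + 1)]
    simp [add_comm]

end Words

lemma delOp_single (b : A) (w : List A) :
    delOp b (single w 1) = wordSum (deletions b w) := by
  simp [delOp, linearCombination_single]

lemma repOp_single (b a : A) (w : List A) :
    repOp b a (single w 1) = wordSum (replacements b a w) := by
  simp [repOp, linearCombination_single]

lemma delOp_single_cons (b c : A) (t : List A) :
    delOp b (single (c :: t) 1) =
      (if c = b then single t 1 else 0) + consOp c (delOp b (single t 1)) := by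
  split_ifs <;> simp [delOp_single, deletions, *]

lemma repOp_single_cons (b a c : A) (t : List A) :
    repOp b a (single (c :: t) 1) =
      (if c = b then single (a :: t) 1 else 0) + consOp c (repOp b a (single t 1)) := by
  split_ifs <;> simp [repOp_single, replacements, *]

lemma delOp_consOp (b c : A) (v : List A →₀ ℂ) :
    delOp b (consOp c v) = (if c = b then v else 0) + consOp c (delOp b v) := by
  have h : delOp b ∘ₗ consOp c = (if c = b then LinearMap.id else 0) + consOp c ∘ₗ delOp b := by
    ext w : 2
    split_ifs <;> simp [delOp_single_cons, *]
  simpa [apply_ite (fun f : (List A →₀ ℂ) →ₗ[ℂ] _ => f v)] using LinearMap.congr_fun h v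

lemma delOp_shOp_single (b a : A) (w : List A) :
    delOp b (shOp a (single w 1)) =
      shOp a (delOp b (single w 1)) + repOp b a (single w 1) +
        if b = a then ((w.length : ℂ) + 1) • single w 1 else 0 := by
  induction w with
  | nil =>
    by_cases h : b = a <;>
      simp [shOp_single, delOp_single, repOp_single, insertions, deletions, replacements, h, eq_comm]
  | cons c t ih =>
    simp only [shOp_single_cons, delOp_single_cons, repOp_single_cons, map_add, delOp_consOp,
      shOp_consOp, ih, apply_ite (shOp a), apply_ite (consOp c), map_zero, map_smul, consOp_single,
      List.length_cons, Nat.cast_succ]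
    split_ifs <;> subst_vars <;> simp_all only [consOp_single, map_zero, not_true_eq_false] <;> module

lemma delOp_single_eq_sum (b : A) (w : List A) :
    delOp b (single w 1) =
      ∑ i ∈ Finset.range w.length, if w[i]? = some b then single (w.eraseIdx i) 1 else 0 := by
  induction w with
  | nil => simp [delOp_single, deletions]
  | cons c t ih =>
    rw [delOp_single_cons, ih, List.length_cons, Finset.sum_range_succ', map_sum, add_comm]
    congr 1
    · simp [apply_ite (consOp c)]
    · simp

lemma r2rWord_eq_sum [Fintype A] (w : List A) :
    r2rWord w = ∑ b : A, shOp b (delOp b (single w 1)) := by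
  simp only [delOp_single_eq_sum, map_sum, apply_ite (shOp _), map_zero]
  rw [Finset.sum_comm]
  refine Finset.sum_congr rfl fun i hi => ?_
  have hi : i < w.length := Finset.mem_range.mp hi
  have hlen : (w.eraseIdx i).length + 1 = w.length := by
    rw [List.length_eraseIdx_of_lt hi]; omega
  simp only [List.getElem?_eq_getElem hi, Option.some.injEq, Finset.sum_ite_eq,
    Finset.mem_univ, if_true, shOp_single_eq_sum, hlen, moveCard]

lemma r2rOp_eq_sum [Fintype A] : r2rOp = ∑ b : A, shOp b ∘ₗ delOp b := by
  ext w : 2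
  simp [r2rOp, linearCombination_single, r2rWord_eq_sum]

theorem r2r_sh_commutator_eq_general (n : ℕ) [Fintype A]
    (a : A) (w : List A) (hw : w.length = n) :
    r2rOp (shOp a (Finsupp.single w (1 : ℂ))) -
      shOp a (r2rOp (Finsupp.single w (1 : ℂ))) =
    ((n : ℂ) + 1) • shOp a (Finsupp.single w (1 : ℂ)) +
      ∑ b : A, shOp b (repOp b a (Finsupp.single w (1 : ℂ))) := by
  subst hw
  have hsh_comm (b : A) (v : List A →₀ ℂ) : shOp b (shOp a v) = shOp a (shOp b v) :=
    LinearMap.congr_fun (shOp_comm b a) v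
  simp only [r2rOp_eq_sum, LinearMap.sum_apply, LinearMap.comp_apply, map_sum,
    delOp_shOp_single, map_add, hsh_comm, apply_ite (shOp _), map_smul, map_zero,
    Finset.sum_add_distrib, Finset.sum_ite_eq', Finset.mem_univ, if_true]
  abel

/-- **Theorem 38, Equation (16).** For words of length `n` over an alphabet of `n`
letters, `R2R_{n+1} ∘ sh_a - sh_a ∘ R2R_n = (n+1) sh_a + ∑_b sh_b ∘ Θ_{b,a}`. -/
theorem r2r_sh_commutator_eq (n : ℕ) [Fintype A] (hcard : Fintype.card A = n)
    (a : A) (w : List A) (hw : w.length = n) :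
    r2rOp (shOp a (Finsupp.single w (1 : ℂ))) -
      shOp a (r2rOp (Finsupp.single w (1 : ℂ))) =
    ((n : ℂ) + 1) • shOp a (Finsupp.single w (1 : ℂ)) +
      ∑ b : A, shOp b (repOp b a (Finsupp.single w (1 : ℂ))) :=
  r2r_sh_commutator_eq_general n a w hw
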